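/- arXiv:1006.0644 — 5 statements merged into one kernel-verified Lean document; each statement's English description precedes it below -/
import Mathlib

section
/- Under the assumptions P, N1, σ² > 0, ρ ∈ [0,1), and P > 2ρN1/(1-ρ), the ordering N1σ²/(P+N1) ≤ D1⁻ ≤ D1⁺ ≤ (1-ρ²)σ² ≤ σ²((1-ρ²)P+N1)/(P+N1) holds, where D1^± = σ²((P+2N1)(1-ρ²) ± sqrt((P²-(P+2N1)²ρ²)(1-ρ²)))/(2(P+N1)). -/
theorem stmt_2 (P N1 σ2 ρ : ℝ) (hP : 0 < P) (hN1 : 0 < N1) (hσ : 0 < σ2)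
    (hρ0 : 0 ≤ ρ) (hρ1 : ρ < 1) (hPbig : 2 * ρ * N1 / (1 - ρ) < P) :
    N1 * σ2 / (P + N1) ≤
        σ2 * ((P + 2 * N1) * (1 - ρ ^ 2) -
          Real.sqrt ((P ^ 2 - (P + 2 * N1) ^ 2 * ρ ^ 2) * (1 - ρ ^ 2))) / (2 * (P + N1)) ∧
      σ2 * ((P + 2 * N1) * (1 - ρ ^ 2) -
          Real.sqrt ((P ^ 2 - (P + 2 * N1) ^ 2 * ρ ^ 2) * (1 - ρ ^ 2))) / (2 * (P + N1)) ≤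
        σ2 * ((P + 2 * N1) * (1 - ρ ^ 2) +
          Real.sqrt ((P ^ 2 - (P + 2 * N1) ^ 2 * ρ ^ 2) * (1 - ρ ^ 2))) / (2 * (P + N1)) ∧
      σ2 * ((P + 2 * N1) * (1 - ρ ^ 2) +
          Real.sqrt ((P ^ 2 - (P + 2 * N1) ^ 2 * ρ ^ 2) * (1 - ρ ^ 2))) / (2 * (P + N1)) ≤
        (1 - ρ ^ 2) * σ2 ∧
      (1 - ρ ^ 2) * σ2 ≤ σ2 * ((1 - ρ ^ 2) * P + N1) / (P + N1) := by
  have h1ρ : (0:ℝ) < 1 - ρ := by linarith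
  rw [div_lt_iff₀ h1ρ] at hPbig
  have hρP : ρ * (P + 2 * N1) < P := by nlinarith
  have hρ2P : ρ ^ 2 * (P + 2 * N1) < P := by nlinarith
  set s := Real.sqrt ((P ^ 2 - (P + 2 * N1) ^ 2 * ρ ^ 2) * (1 - ρ ^ 2)) with hs
  have hs0 : 0 ≤ s := Real.sqrt_nonneg _
  have hb1 : 0 ≤ P * (1 - ρ ^ 2) - 2 * N1 * ρ ^ 2 := by nlinarith
  have hs1 : s ≤ P * (1 - ρ ^ 2) - 2 * N1 * ρ ^ 2 := by
    calc s ≤ Real.sqrt ((P * (1 - ρ ^ 2) - 2 * N1 * ρ ^ 2) ^ 2) :=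
          Real.sqrt_le_sqrt (by nlinarith [sq_nonneg (N1 * ρ)])
      _ = _ := Real.sqrt_sq hb1
  have hb2 : 0 ≤ P * (1 - ρ ^ 2) := by nlinarith
  have haux : (0:ℝ) ≤ (1 - ρ ^ 2) * ρ ^ 2 * (4 * N1 * P + 4 * N1 ^ 2) := by
    apply mul_nonneg (mul_nonneg (by nlinarith) (sq_nonneg ρ)); positivity
  have hs2 : s ≤ P * (1 - ρ ^ 2) := by
    calc s ≤ Real.sqrt ((P * (1 - ρ ^ 2)) ^ 2) := Real.sqrt_le_sqrt (by nlinarith [haux])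
      _ = _ := Real.sqrt_sq hb2
  have hPN : (0:ℝ) < P + N1 := by linarith
  have h2PN : (0:ℝ) < 2 * (P + N1) := by linarith
  refine ⟨?_, ?_, ?_, ?_⟩
  · rw [div_le_div_iff₀ hPN h2PN]
    have h2 : 2 * N1 ≤ (P + 2 * N1) * (1 - ρ ^ 2) - s := by nlinarith
    nlinarith [mul_le_mul_of_nonneg_left h2 (mul_pos hσ hPN).le]
  · rw [div_le_div_iff₀ h2PN h2PN]
    nlinarith [mul_nonneg (mul_nonneg hσ.le hs0) h2PN.le]
  · rw [div_le_iff₀ h2PN]; nlinarith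
  · rw [le_div_iff₀ hPN]
    nlinarith [mul_nonneg (mul_nonneg hσ.le hN1.le) (sq_nonneg ρ)]
end

section
/- For the uncoded scheme with α ∈ [0,1] and β = 1-α, the distortion D̂1(α,β) = σ²[Pβ²(1-ρ²)/((P+N1)(α²+2αβρ+β²)) + N1/(P+N1)] is a decreasing function of α on [0,1] (with σ², P, N1 > 0, ρ ∈ (0,1)); in particular D̂1(1,0) = N1σ²/(P+N1) and D̂1(0,1) = σ²((1-ρ²)P+N1)/(P+N1). -/
/-!
Dividing by `(1 - α)²`, the ratio `(1 - α)² / (α² + 2α(1 - α)ρ + (1 - α)²)` is the reciprocal of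
`t² + 2ρt + 1` with `t = α / (1 - α)`, which increases with `α` as soon as `ρ ≥ 0`. Hence `D̂₁` is a
positive multiple of a strictly decreasing function plus a constant.
-/

/-- The variance of `α X + (1 - α) Y` for unit-variance `X`, `Y` with correlation `ρ`. -/
def mixVariance (ρ α : ℝ) : ℝ := α ^ 2 + 2 * α * (1 - α) * ρ + (1 - α) ^ 2

lemma mixVariance_pos {ρ α : ℝ} (hρ : 0 ≤ ρ) (hα : α ∈ Set.Icc (0 : ℝ) 1) :
    0 < mixVariance ρ α := by
  obtain ⟨h0, h1⟩ := hα
  have hcross : 0 ≤ 2 * α * (1 - α) * ρ := by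
    have : 0 ≤ 1 - α := by linarith
    positivity
  unfold mixVariance
  nlinarith [sq_nonneg (2 * α - 1)]

lemma sq_mul_mixVariance_sub_sq_mul_mixVariance (ρ a b : ℝ) :
    (1 - a) ^ 2 * mixVariance ρ b - (1 - b) ^ 2 * mixVariance ρ a =
      (b - a) * ((1 - a) * b + (1 - b) * a + 2 * ρ * ((1 - a) * (1 - b))) := by
  unfold mixVariance
  ring

lemma strictAntiOn_sq_div_mixVariance {ρ : ℝ} (hρ : 0 ≤ ρ) :
    StrictAntiOn (fun α => (1 - α) ^ 2 / mixVariance ρ α) (Set.Icc 0 1) := by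
  intro a ha b hb hab
  have hb0 : 0 < b := lt_of_le_of_lt ha.1 hab
  have ha1 : 0 < 1 - a := by linarith [hb.2]
  have hb1 : 0 ≤ 1 - b := by linarith [hb.2]
  have hfactor : 0 < (1 - a) * b + (1 - b) * a + 2 * ρ * ((1 - a) * (1 - b)) := by
    have := mul_nonneg hb1 ha.1
    have := mul_nonneg (mul_nonneg (by linarith : (0 : ℝ) ≤ 2 * ρ) ha1.le) hb1
    nlinarith [mul_pos ha1 hb0]
  show (1 - b) ^ 2 / mixVariance ρ b < (1 - a) ^ 2 / mixVariance ρ a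
  rw [div_lt_div_iff₀ (mixVariance_pos hρ hb) (mixVariance_pos hρ ha), ← sub_pos,
    sq_mul_mixVariance_sub_sq_mul_mixVariance]
  exact mul_pos (by linarith) hfactor

theorem stmt_3 (σ2 P N1 ρ : ℝ) (hσ : 0 < σ2) (hP : 0 < P) (hN1 : 0 < N1)
    (hρ0 : 0 < ρ) (hρ1 : ρ < 1)
    (D1hat : ℝ → ℝ)
    (hD1hat : ∀ α : ℝ, D1hat α =
      σ2 * (P * (1 - α) ^ 2 * (1 - ρ ^ 2) /
        ((P + N1) * (α ^ 2 + 2 * α * (1 - α) * ρ + (1 - α) ^ 2)) + N1 / (P + N1))) :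
    StrictAntiOn D1hat (Set.Icc 0 1) ∧
      D1hat 1 = N1 * σ2 / (P + N1) ∧
      D1hat 0 = σ2 * ((1 - ρ ^ 2) * P + N1) / (P + N1) := by
  have hPN : 0 < P + N1 := by linarith
  have hgain : 0 < P * (1 - ρ ^ 2) / (P + N1) := by
    have : 0 < 1 - ρ ^ 2 := by nlinarith
    positivity
  have hform : ∀ α, D1hat α = σ2 * (P * (1 - ρ ^ 2) / (P + N1) *
      ((1 - α) ^ 2 / mixVariance ρ α) + N1 / (P + N1)) := by
    intro α
    rw [hD1hat, mixVariance, div_eq_mul_inv, mul_inv]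
    ring
  refine ⟨fun a ha b hb hab => ?_, ?_, ?_⟩
  · rw [hform a, hform b]
    have hdecr := strictAntiOn_sq_div_mixVariance hρ0.le ha hb hab
    exact mul_lt_mul_of_pos_left (add_lt_add_left (mul_lt_mul_of_pos_left hdecr hgain) _) hσ
  · rw [hD1hat 1]
    field_simp
    ring
  · rw [hD1hat 0]
    field_simp
    ring
end

section
/- With α̃ = sqrt(N1/D1 - N1/(σ²(1-ρ²))) and β̃ = N1ρ/(α̃(1-ρ²)σ²), the quantity α̃² + β̃² + 2α̃β̃ρ is at most P/σ² if and only if D1 ∈ [D1⁻, D1⁺], where D1^± = σ²((P+2N1)(1-ρ²) ± sqrt((P²-(P+2N1)²ρ²)(1-ρ²)))/(2(P+N1)). -/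
/-!
Since `α ^ 2 = N1 / D1 - N1 / (σ2 * (1 - ρ ^ 2)) > 0` and `α * β = N1 * ρ / ((1 - ρ ^ 2) * σ2)`
does not depend on `α`, multiplying the power constraint by `α ^ 2` and clearing denominators turns
it into the quadratic inequality
`(P + N1) * D1 ^ 2 - σ2 * (P + 2 * N1) * (1 - ρ ^ 2) * D1 + N1 * σ2 ^ 2 * (1 - ρ ^ 2) ≤ 0`.
Its discriminant is `σ2 ^ 2 * (P ^ 2 - (P + 2 * N1) ^ 2 * ρ ^ 2) * (1 - ρ ^ 2)`, nonnegative because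
`P ≥ 2 ρ N1 / (1 - ρ)` means `(P + 2 * N1) * ρ ≤ P`, and `D1⁻`, `D1⁺` are its two roots.
-/

theorem quadratic_nonpos_iff_mem_Icc {K : Type*} [Field K] [LinearOrder K] [IsStrictOrderedRing K]
    {a b c s : K} (ha : 0 < a) (hs : 0 ≤ s) (h : discrim a b c = s * s) (x : K) :
    a * (x * x) + b * x + c ≤ 0 ↔ x ∈ Set.Icc ((-b - s) / (2 * a)) ((-b + s) / (2 * a)) := by
  have h2a : 0 < 2 * a := by positivity
  have key : 4 * a * (a * (x * x) + b * x + c) = (2 * a * x + b) ^ 2 - s ^ 2 := by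
    rw [discrim] at h
    linear_combination -h
  rw [← mul_le_mul_iff_of_pos_left (by positivity : (0 : K) < 4 * a), mul_zero, key, sub_nonpos,
    sq_le_sq, abs_of_nonneg hs, abs_le, Set.mem_Icc, div_le_iff₀ h2a, le_div_iff₀ h2a]
  constructor <;> rintro ⟨h₁, h₂⟩ <;> constructor <;> linarith

theorem discrim_factor_nonneg {P N1 ρ : ℝ} (hP : 0 < P) (hN1 : 0 < N1) (hρ0 : 0 < ρ)
    (hρ1 : ρ < 1) (hPbig : 2 * ρ * N1 / (1 - ρ) ≤ P) :
    0 ≤ (P ^ 2 - (P + 2 * N1) ^ 2 * ρ ^ 2) * (1 - ρ ^ 2) := by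
  have hρP : (P + 2 * N1) * ρ ≤ P := by
    rw [div_le_iff₀ (by linarith)] at hPbig
    linarith
  have hsq : ((P + 2 * N1) * ρ) ^ 2 ≤ P ^ 2 := pow_le_pow_left₀ (by positivity) hρP 2
  exact mul_nonneg (by linarith) (by nlinarith)

theorem quadratic_nonpos_iff_mem_Icc_roots {P N1 σ2 ρ D1 : ℝ} (hPN1 : 0 < P + N1) (hσ : 0 ≤ σ2)
    (hY : 0 ≤ (P ^ 2 - (P + 2 * N1) ^ 2 * ρ ^ 2) * (1 - ρ ^ 2)) :
    (P + N1) * D1 ^ 2 - σ2 * (P + 2 * N1) * (1 - ρ ^ 2) * D1 + N1 * σ2 ^ 2 * (1 - ρ ^ 2) ≤ 0 ↔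
      D1 ∈ Set.Icc
        (σ2 * ((P + 2 * N1) * (1 - ρ ^ 2) -
          Real.sqrt ((P ^ 2 - (P + 2 * N1) ^ 2 * ρ ^ 2) * (1 - ρ ^ 2))) / (2 * (P + N1)))
        (σ2 * ((P + 2 * N1) * (1 - ρ ^ 2) +
          Real.sqrt ((P ^ 2 - (P + 2 * N1) ^ 2 * ρ ^ 2) * (1 - ρ ^ 2))) / (2 * (P + N1))) := by
  set Y := (P ^ 2 - (P + 2 * N1) ^ 2 * ρ ^ 2) * (1 - ρ ^ 2)
  have hdiscrim : discrim (P + N1) (-(σ2 * (P + 2 * N1) * (1 - ρ ^ 2))) (N1 * σ2 ^ 2 * (1 - ρ ^ 2))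
      = (σ2 * √Y) * (σ2 * √Y) := by
    rw [discrim]
    linear_combination (-σ2 ^ 2) * Real.mul_self_sqrt hY
  have hlo : (-(-(σ2 * (P + 2 * N1) * (1 - ρ ^ 2))) - σ2 * √Y) / (2 * (P + N1))
      = σ2 * ((P + 2 * N1) * (1 - ρ ^ 2) - √Y) / (2 * (P + N1)) := by ring
  have hhi : (-(-(σ2 * (P + 2 * N1) * (1 - ρ ^ 2))) + σ2 * √Y) / (2 * (P + N1))
      = σ2 * ((P + 2 * N1) * (1 - ρ ^ 2) + √Y) / (2 * (P + N1)) := by ring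
  rw [← hlo, ← hhi, ← quadratic_nonpos_iff_mem_Icc hPN1 (by positivity) hdiscrim]
  ring_nf

theorem power_constraint_iff_quadratic_nonpos {P N1 σ2 ρ D1 α β : ℝ} (hN1 : 0 < N1)
    (hσ : 0 < σ2) (hD1pos : 0 < D1) (hD1lt : D1 < (1 - ρ ^ 2) * σ2)
    (hα : α = Real.sqrt (N1 / D1 - N1 / (σ2 * (1 - ρ ^ 2))))
    (hβ : β = N1 * ρ / (α * (1 - ρ ^ 2) * σ2)) :
    α ^ 2 + β ^ 2 + 2 * α * β * ρ ≤ P / σ2 ↔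
      (P + N1) * D1 ^ 2 - σ2 * (P + 2 * N1) * (1 - ρ ^ 2) * D1 + N1 * σ2 ^ 2 * (1 - ρ ^ 2) ≤ 0 := by
  have hr : 0 < 1 - ρ ^ 2 := pos_of_mul_pos_left (hD1pos.trans hD1lt) hσ.le
  set A := N1 / D1 - N1 / (σ2 * (1 - ρ ^ 2))
  have hA : 0 < A := sub_pos.2 (div_lt_div_of_pos_left hN1 hD1pos (by linarith))
  have hαsq : α ^ 2 = A := by rw [hα, Real.sq_sqrt hA.le]
  have hαpos : 0 < α := hα ▸ Real.sqrt_pos.2 hA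
  have hαβ : α * β = N1 * ρ / ((1 - ρ ^ 2) * σ2) := by
    rw [hβ]
    field_simp
  set k := N1 * ρ / ((1 - ρ ^ 2) * σ2)
  have hcost : α ^ 2 + β ^ 2 + 2 * α * β * ρ = (A ^ 2 + k ^ 2 + 2 * A * k * ρ) / A := by
    rw [← hαsq, ← hαβ]
    field_simp
  have hscaled : P / σ2 * A - (A ^ 2 + k ^ 2 + 2 * A * k * ρ)
      = -((P + N1) * D1 ^ 2 - σ2 * (P + 2 * N1) * (1 - ρ ^ 2) * D1 + N1 * σ2 ^ 2 * (1 - ρ ^ 2))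
        * (N1 / (D1 ^ 2 * σ2 ^ 2 * (1 - ρ ^ 2))) := by
    simp only [A, k]
    field_simp
    ring
  rw [hcost, div_le_iff₀ hA, ← sub_nonneg, hscaled,
    mul_nonneg_iff_of_pos_right (by positivity), neg_nonneg]

theorem stmt_5 (P N1 σ2 ρ D1 : ℝ) (hP : 0 < P) (hN1 : 0 < N1) (hσ : 0 < σ2)
    (hρ0 : 0 < ρ) (hρ1 : ρ < 1) (hPbig : 2 * ρ * N1 / (1 - ρ) ≤ P)
    (hD1pos : 0 < D1) (hD1lt : D1 < (1 - ρ ^ 2) * σ2)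
    (α β : ℝ)
    (hα : α = Real.sqrt (N1 / D1 - N1 / (σ2 * (1 - ρ ^ 2))))
    (hβ : β = N1 * ρ / (α * (1 - ρ ^ 2) * σ2)) :
    α ^ 2 + β ^ 2 + 2 * α * β * ρ ≤ P / σ2 ↔
      D1 ∈ Set.Icc
        (σ2 * ((P + 2 * N1) * (1 - ρ ^ 2) -
          Real.sqrt ((P ^ 2 - (P + 2 * N1) ^ 2 * ρ ^ 2) * (1 - ρ ^ 2))) / (2 * (P + N1)))
        (σ2 * ((P + 2 * N1) * (1 - ρ ^ 2) +
          Real.sqrt ((P ^ 2 - (P + 2 * N1) ^ 2 * ρ ^ 2) * (1 - ρ ^ 2))) / (2 * (P + N1))) := by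
  rw [power_constraint_iff_quadratic_nonpos hN1 hσ hD1pos hD1lt hα hβ]
  exact quadratic_nonpos_iff_mem_Icc_roots (by linarith) hσ.le
    (discrim_factor_nonneg hP hN1 hρ0 hρ1 hPbig)
end

section
/- The threshold function Γ(D1) = (σ⁴(1-ρ²) - 2D1σ²(1-ρ²) + D1²)/(D1(σ²(1-ρ²)-D1)), defined for 0 < D1 < σ²(1-ρ²), is always ≥ 2ρ/(1-ρ)·(N1/N1) in the following sense: the minimum of Γ over D1 ∈ (0, σ²(1-ρ²)) equals 2ρ/(1-ρ). Hence P/N1 ≤ 2ρ/(1-ρ) implies P/N1 ≤ Γ(D1) for all D1 in the interval. -/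
theorem stmt_11 (σ2 ρ : ℝ) (hσ : 0 < σ2) (hρ0 : 0 < ρ) (hρ1 : ρ < 1)
    (Γ : ℝ → ℝ)
    (hΓ : ∀ D1 : ℝ, Γ D1 =
      (σ2 ^ 2 * (1 - ρ ^ 2) - 2 * D1 * σ2 * (1 - ρ ^ 2) + D1 ^ 2) /
        (D1 * (σ2 * (1 - ρ ^ 2) - D1))) :
    IsLeast (Γ '' Set.Ioo 0 (σ2 * (1 - ρ ^ 2))) (2 * ρ / (1 - ρ)) ∧
      ∀ P N1 : ℝ, 0 < P → 0 < N1 → P / N1 ≤ 2 * ρ / (1 - ρ) →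
        ∀ D1 ∈ Set.Ioo 0 (σ2 * (1 - ρ ^ 2)), P / N1 ≤ Γ D1 := by
  have hρ2 : (0:ℝ) < 1 - ρ ^ 2 := by nlinarith
  have hρ1' : (0:ℝ) < 1 - ρ := by linarith
  have hgap : (0:ℝ) < σ2 * (1 - ρ ^ 2) - σ2 * (1 - ρ) := by nlinarith [mul_pos hσ (mul_pos hρ0 hρ1')]
  have hlb : ∀ D1 ∈ Set.Ioo 0 (σ2 * (1 - ρ ^ 2)), 2 * ρ / (1 - ρ) ≤ Γ D1 := by
    rintro D1 ⟨hD0, hDc⟩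
    rw [hΓ]
    rw [div_le_div_iff₀ hρ1' (by nlinarith)]
    nlinarith [sq_nonneg (D1 - σ2 * (1 - ρ)), mul_nonneg hρ0.le (sq_nonneg (D1 - σ2 * (1 - ρ)))]
  refine ⟨⟨⟨σ2 * (1 - ρ), ⟨by positivity, by linarith⟩, ?_⟩, fun y ⟨D1, hD, hy⟩ => hy ▸ hlb D1 hD⟩,
    fun P N1 hP hN hle D1 hD => hle.trans (hlb D1 hD)⟩
  rw [hΓ]
  have h1 : σ2 * (1 - ρ) * (σ2 * (1 - ρ ^ 2) - σ2 * (1 - ρ)) ≠ 0 :=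
    (mul_pos (mul_pos hσ hρ1') hgap).ne'
  rw [div_eq_div_iff h1 hρ1'.ne']
  ring
end

section
/- For σ² > 0, ρ ∈ (0,1), N1 > 0 and P > 2ρN1/(1-ρ), the inequality P/N1 ≥ Γ(D1) = (σ⁴(1-ρ²)-2D1σ²(1-ρ²)+D1²)/(D1(σ²(1-ρ²)-D1)) holds if and only if D1 ∈ [D1⁻, D1⁺], where D1^± = σ²((P+2N1)(1-ρ²) ± sqrt((P²-(P+2N1)²ρ²)(1-ρ²)))/(2(P+N1)). -/
set_option maxHeartbeats 1000000


theorem stmt_12 (σ2 N1 P ρ : ℝ) (hσ : 0 < σ2) (hN1 : 0 < N1) (hP : 0 < P)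
    (hρ0 : 0 < ρ) (hρ1 : ρ < 1) (hPbig : 2 * ρ * N1 / (1 - ρ) < P) :
    ∀ D1 ∈ Set.Ioo 0 (σ2 * (1 - ρ ^ 2)),
      ((σ2 ^ 2 * (1 - ρ ^ 2) - 2 * D1 * σ2 * (1 - ρ ^ 2) + D1 ^ 2) /
          (D1 * (σ2 * (1 - ρ ^ 2) - D1)) ≤ P / N1 ↔
        D1 ∈ Set.Icc
          (σ2 * ((P + 2 * N1) * (1 - ρ ^ 2) -
            Real.sqrt ((P ^ 2 - (P + 2 * N1) ^ 2 * ρ ^ 2) * (1 - ρ ^ 2))) / (2 * (P + N1)))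
          (σ2 * ((P + 2 * N1) * (1 - ρ ^ 2) +
            Real.sqrt ((P ^ 2 - (P + 2 * N1) ^ 2 * ρ ^ 2) * (1 - ρ ^ 2))) / (2 * (P + N1)))) := by
  intro D1 hD
  obtain ⟨hD0, hDc⟩ := hD
  have hρ2 : 0 < 1 - ρ ^ 2 := by nlinarith
  have hden : 0 < D1 * (σ2 * (1 - ρ ^ 2) - D1) := by nlinarith
  have hρlt : 2 * ρ * N1 < P * (1 - ρ) := by
    rw [div_lt_iff₀ (by linarith)] at hPbig
    linarith
  have hΔ0 : 0 ≤ (P ^ 2 - (P + 2 * N1) ^ 2 * ρ ^ 2) * (1 - ρ ^ 2) := by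
    have h1 : (P + 2 * N1) * ρ ≤ P := by nlinarith
    have h2 : 0 ≤ (P + 2 * N1) * ρ := by positivity
    have h3 : 0 ≤ P ^ 2 - (P + 2 * N1) ^ 2 * ρ ^ 2 := by nlinarith
    exact mul_nonneg h3 hρ2.le
  set s := Real.sqrt ((P ^ 2 - (P + 2 * N1) ^ 2 * ρ ^ 2) * (1 - ρ ^ 2)) with hsdef
  have hs2 : s ^ 2 = (P ^ 2 - (P + 2 * N1) ^ 2 * ρ ^ 2) * (1 - ρ ^ 2) := Real.sq_sqrt hΔ0
  have hs0 : 0 ≤ s := Real.sqrt_nonneg _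
  have hPN : (0:ℝ) < 2 * (P + N1) := by linarith
  have hσs : 0 ≤ σ2 * s := mul_nonneg hσ.le hs0
  have hfact : (2 * (P + N1) * D1 - σ2 * ((P + 2 * N1) * (1 - ρ ^ 2))) ^ 2 - (σ2 * s) ^ 2 =
      4 * (P + N1) * ((σ2 ^ 2 * (1 - ρ ^ 2) - 2 * D1 * σ2 * (1 - ρ ^ 2) + D1 ^ 2) * N1 -
        P * (D1 * (σ2 * (1 - ρ ^ 2) - D1))) := by
    linear_combination (-(σ2 ^ 2)) * hs2
  rw [div_le_div_iff₀ hden hN1, Set.mem_Icc, div_le_iff₀ hPN, le_div_iff₀ hPN]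
  constructor
  · intro h
    have hu : (2 * (P + N1) * D1 - σ2 * ((P + 2 * N1) * (1 - ρ ^ 2))) ^ 2 ≤ (σ2 * s) ^ 2 := by
      have h4 : 4 * (P + N1) * ((σ2 ^ 2 * (1 - ρ ^ 2) - 2 * D1 * σ2 * (1 - ρ ^ 2) + D1 ^ 2) * N1 -
          P * (D1 * (σ2 * (1 - ρ ^ 2) - D1))) ≤ 0 :=
        mul_nonpos_of_nonneg_of_nonpos (by linarith) (by linarith)
      linarith [hfact]
    constructor
    · nlinarith [hu, hσs, sq_nonneg (2 * (P + N1) * D1 - σ2 * ((P + 2 * N1) * (1 - ρ ^ 2)) + σ2 * s)]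
    · nlinarith [hu, hσs, sq_nonneg (2 * (P + N1) * D1 - σ2 * ((P + 2 * N1) * (1 - ρ ^ 2)) - σ2 * s)]
  · rintro ⟨h1, h2⟩
    have hA : 0 ≤ σ2 * s - (2 * (P + N1) * D1 - σ2 * ((P + 2 * N1) * (1 - ρ ^ 2))) := by linarith
    have hB : 0 ≤ (2 * (P + N1) * D1 - σ2 * ((P + 2 * N1) * (1 - ρ ^ 2))) + σ2 * s := by linarith
    nlinarith [mul_nonneg hA hB, hfact, hPN]
end
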